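/- arXiv:1410.3375 — 3 statements merged into one kernel-verified Lean document; each statement's English description precedes it below -/
import Mathlib

section
/- Let k ≥ 2 and let G be a graph on n ≥ 2^{2k} vertices. Then G contains no induced k-vertex subgraph with an even number of edges if and only if C(k,2) is odd and either (1) G is a complete graph, or (2) k ≡ 3 (mod 4) and G is the disjoint union of two complete graphs. -/
open scoped Classical

/-- Number of edges of the subgraph of `G` induced by the vertex set `U`. -/
noncomputable def inducedEdges {V : Type*} (G : SimpleGraph V) (U : Finset V) : ℕ :=
  Nat.card {e : Sym2 V // e ∈ G.edgeSet ∧ ∀ v ∈ e, v ∈ U}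

/-- `G` is a complete graph. -/
def IsCompleteGraph {V : Type*} (G : SimpleGraph V) : Prop :=
  ∀ u v : V, u ≠ v → G.Adj u v

/-- `G` is the disjoint union of two complete graphs. -/
def IsTwoCliques {V : Type*} (G : SimpleGraph V) : Prop :=
  ∃ A : Set V, (∀ u ∈ A, ∀ v ∈ A, u ≠ v → G.Adj u v) ∧
    (∀ u ∉ A, ∀ v ∉ A, u ≠ v → G.Adj u v) ∧
    (∀ u ∈ A, ∀ v ∉ A, ¬ G.Adj u v)

/-- `G` is a complete bipartite graph. -/
def IsCompleteBipartite {V : Type*} (G : SimpleGraph V) : Prop :=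
  ∃ A : Set V, (∀ u ∈ A, ∀ v ∈ A, ¬ G.Adj u v) ∧
    (∀ u ∉ A, ∀ v ∉ A, ¬ G.Adj u v) ∧
    (∀ u ∈ A, ∀ v ∉ A, G.Adj u v)

/-!
Swapping one vertex of a `k`-set for another changes its edge count by the difference of their
degrees into the remaining `k - 1` vertices. If every `k`-set spans an odd number of edges, this
gives the four-cycle relation `(x ~ z ⊕ y ~ z) = (x ~ w ⊕ y ~ w)`; fixing a vertex `o`, it makes
the parity of the number of edges of the triangle `o u v` independent of `u, v`. Odd triangles make
`G` two disjoint cliques (with `o` and its neighbours as one side), even triangles make it complete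
bipartite. A complete bipartite graph on `2k` vertices has an independent `k`-set, so only two
cliques remain. A `k`-set meeting them in `a` and `b` vertices spans `C(a,2) + C(b,2)` edges; taking
`b = 0` and `b = 1` shows `C(k,2)` and `C(k-1,2)` are both odd, i.e. `k ≡ 3 (mod 4)`, unless `G` is
complete.
-/

open Finset

theorem Nat.odd_choose_two_iff (n : ℕ) : Odd (n.choose 2) ↔ n % 4 = 2 ∨ n % 4 = 3 := by
  induction n with
  | zero => decide
  | succ n ih =>
    rw [Nat.choose_succ_succ', Nat.choose_one_right, add_comm, Nat.odd_add, ih, Nat.even_iff]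
    omega

theorem Finset.even_card_filter_insert {α : Type*} [DecidableEq α] {p : α → Prop}
    [DecidablePred p] {s : Finset α} {a : α} (ha : a ∉ s) :
    Even #{x ∈ insert a s | p x} ↔ (Even #{x ∈ s | p x} ↔ ¬ p a) := by
  rw [filter_insert]
  split_ifs with hpa
  · rw [card_insert_of_notMem (fun h => ha (mem_filter.1 h).1), Nat.even_add_one]
    tauto
  · tauto

namespace SimpleGraph

variable {V : Type*} {G : SimpleGraph V}

theorem inducedEdges_eq_card_filter_sym2 (U : Finset V) :
    inducedEdges G U = #{e ∈ U.sym2 | e ∈ G.edgeSet} := by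
  rw [inducedEdges, ← Nat.card_eq_finsetCard]
  exact Nat.card_congr (Equiv.subtypeEquivRight fun e => by simp [and_comm])

theorem inducedEdges_insert [DecidableEq V] {S : Finset V} {x : V} (hx : x ∉ S) :
    inducedEdges G (insert x S) = inducedEdges G S + #{v ∈ S | G.Adj x v} := by
  simp only [inducedEdges_eq_card_filter_sym2, ← cons_eq_insert _ _ hx, sym2_cons,
    filter_disjUnion, card_disjUnion, filter_map, card_map, filter_cons]
  rw [if_neg (by simp), add_comm]
  rfl

theorem IsIndepSet.inducedEdges_eq_zero {U : Finset V} (hU : G.IsIndepSet (U : Set V)) :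
    inducedEdges G U = 0 := by
  rw [inducedEdges_eq_card_filter_sym2, card_eq_zero, filter_eq_empty_iff]
  refine Sym2.ind fun u v huv hadj => ?_
  rw [mk_mem_sym2_iff] at huv
  exact hU huv.1 huv.2 (G.ne_of_adj hadj) hadj

theorem IsClique.inducedEdges_eq_choose_two [DecidableEq V] {W : Finset V}
    (hW : G.IsClique (W : Set V)) : inducedEdges G W = (#W).choose 2 := by
  induction W using Finset.induction_on with
  | empty => simp [inducedEdges_eq_card_filter_sym2]
  | @insert x S hx ih =>
    rw [coe_insert, isClique_insert] at hW
    rw [inducedEdges_insert hx, ih hW.1,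
      filter_true_of_mem fun v hv => hW.2 v hv (ne_of_mem_of_not_mem hv hx).symm,
      card_insert_of_notMem hx, Nat.choose_succ_succ', Nat.choose_one_right, add_comm]

theorem inducedEdges_eq_choose_two_add_choose_two [DecidableEq V] {A : Set V}
    (hA : ∀ u v, u ≠ v → (G.Adj u v ↔ (u ∈ A ↔ v ∈ A))) (W : Finset V) :
    inducedEdges G W = (#{v ∈ W | v ∈ A}).choose 2 + (#{v ∈ W | v ∉ A}).choose 2 := by
  induction W using Finset.induction_on with
  | empty => simp [inducedEdges_eq_card_filter_sym2]
  | @insert x S hx ih =>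
    have hnbr : {v ∈ S | G.Adj x v} = {v ∈ S | (x ∈ A ↔ v ∈ A)} :=
      filter_congr fun v hv => hA x v (ne_of_mem_of_not_mem hv hx).symm
    rw [inducedEdges_insert hx, ih, hnbr, filter_insert, filter_insert]
    by_cases hxA : x ∈ A
    · rw [if_pos hxA, if_neg (not_not.2 hxA), card_insert_of_notMem (by simp [hx]),
        Nat.choose_succ_succ', Nat.choose_one_right]
      simp only [hxA, true_iff]
      ring
    · rw [if_neg hxA, if_pos hxA, card_insert_of_notMem (by simp [hx]),
        Nat.choose_succ_succ', Nat.choose_one_right]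
      simp only [hxA, false_iff]
      ring

theorem isTwoCliques_iff :
    IsTwoCliques G ↔ ∃ A : Set V, ∀ u v, u ≠ v → (G.Adj u v ↔ (u ∈ A ↔ v ∈ A)) := by
  constructor
  · rintro ⟨A, hA, hAc, hAAc⟩
    refine ⟨A, fun u v huv => ?_⟩
    by_cases hu : u ∈ A <;> by_cases hv : v ∈ A
    · exact iff_of_true (hA u hu v hv huv) (iff_of_true hu hv)
    · exact iff_of_false (hAAc u hu v hv) (by simp [hu, hv])
    · exact iff_of_false (fun h => hAAc v hv u hu h.symm) (by simp [hu, hv])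
    · exact iff_of_true (hAc u hu v hv huv) (iff_of_false hu hv)
  · rintro ⟨A, hA⟩
    refine ⟨A, fun u hu v hv huv => ?_, fun u hu v hv huv => ?_, fun u hu v hv => ?_⟩
    · exact (hA u v huv).2 (iff_of_true hu hv)
    · exact (hA u v huv).2 (iff_of_false hu hv)
    · rw [hA u v (ne_of_mem_of_not_mem hu hv)]
      tauto

theorem isCompleteBipartite_of_forall_adj_iff {A : Set V}
    (hA : ∀ u v, G.Adj u v ↔ ¬ (u ∈ A ↔ v ∈ A)) : IsCompleteBipartite G :=
  ⟨A, fun u hu v hv => by simp [hA, hu, hv], fun u hu v hv => by simp [hA, hu, hv],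
    fun u hu v hv => by simp [hA, hu, hv]⟩

theorem IsTwoCliques.odd_inducedEdges [DecidableEq V] (hG : IsTwoCliques G) {W : Finset V}
    (hW : #W % 4 = 3) : Odd (inducedEdges G W) := by
  obtain ⟨A, hA⟩ := isTwoCliques_iff.1 hG
  have hsplit := card_filter_add_card_filter_not (s := W) (· ∈ A)
  rw [inducedEdges_eq_choose_two_add_choose_two hA, Nat.odd_add, Nat.odd_choose_two_iff,
    ← Nat.not_odd_iff_even, Nat.odd_choose_two_iff]
  omega

def NoEvenInduced (G : SimpleGraph V) (k : ℕ) : Prop :=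
  ∀ W : Finset V, #W = k → Odd (inducedEdges G W)

namespace NoEvenInduced

variable {k : ℕ}

theorem card_lt_of_isIndepSet (h : NoEvenInduced G k) {s : Finset V}
    (hs : G.IsIndepSet (s : Set V)) : #s < k := by
  by_contra! hks
  obtain ⟨W, hWs, hW⟩ := exists_subset_card_eq hks
  have hodd := h W hW
  rw [IsIndepSet.inducedEdges_eq_zero (hs.mono (coe_subset.2 hWs))] at hodd
  exact Nat.not_odd_zero hodd

theorem not_isCompleteBipartite [Fintype V] (h : NoEvenInduced G k)
    (hn : 2 * k ≤ Fintype.card V) : ¬ IsCompleteBipartite G := by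
  rintro ⟨A, hA, hAc, -⟩
  have hin := h.card_lt_of_isIndepSet (s := {v | v ∈ A}) fun u hu v hv _ =>
    hA u (mem_filter.1 hu).2 v (mem_filter.1 hv).2
  have hout := h.card_lt_of_isIndepSet (s := {v | v ∉ A}) fun u hu v hv _ =>
    hAc u (mem_filter.1 hu).2 v (mem_filter.1 hv).2
  have hsplit := card_filter_add_card_filter_not (s := univ) (· ∈ A)
  rw [card_univ] at hsplit
  omega

theorem even_card_filter_adj_iff [DecidableEq V] (h : NoEvenInduced G k) {S : Finset V}
    (hS : #S + 1 = k) {x y : V} (hx : x ∉ S) (hy : y ∉ S) :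
    Even #{v ∈ S | G.Adj x v} ↔ Even #{v ∈ S | G.Adj y v} := by
  have hoddx := h (insert x S) (by rw [card_insert_of_notMem hx, hS])
  have hoddy := h (insert y S) (by rw [card_insert_of_notMem hy, hS])
  rw [inducedEdges_insert hx, Nat.odd_add] at hoddx
  rw [inducedEdges_insert hy, Nat.odd_add] at hoddy
  exact hoddx.symm.trans hoddy

theorem adj_iff_adj_iff_adj_iff_adj [Fintype V] [DecidableEq V] (h : NoEvenInduced G k)
    (hk : 2 ≤ k) (hn : k + 2 ≤ Fintype.card V) {x y z w : V} (hxz : x ≠ z) (hxw : x ≠ w)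
    (hyz : y ≠ z) (hyw : y ≠ w) : (G.Adj x z ↔ G.Adj y z) ↔ (G.Adj x w ↔ G.Adj y w) := by
  obtain ⟨T, hT, hTk⟩ := exists_subset_card_eq (s := univ \ {x, y, z, w}) (n := k - 2) (by
    have := card_le_four (a := x) (b := y) (c := z) (d := w)
    rw [card_sdiff_of_subset (subset_univ _), card_univ]
    omega)
  have hnT : ∀ v ∈ ({x, y, z, w} : Finset V), v ∉ T := fun v hv hvT =>
    (mem_sdiff.1 (hT hvT)).2 hv
  have hzT := hnT z (by simp)
  have hwT := hnT w (by simp)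
  have hz := h.even_card_filter_adj_iff (S := insert z T) (x := x) (y := y)
    (by rw [card_insert_of_notMem hzT]; omega) (by simp [hxz, hnT x]) (by simp [hyz, hnT y])
  have hw := h.even_card_filter_adj_iff (S := insert w T) (x := x) (y := y)
    (by rw [card_insert_of_notMem hwT]; omega) (by simp [hxw, hnT x]) (by simp [hyw, hnT y])
  rw [even_card_filter_insert hzT, even_card_filter_insert hzT] at hz
  rw [even_card_filter_insert hwT, even_card_filter_insert hwT] at hw
  tauto

-- `G.Adj u v ↔ (G.Adj o u ↔ G.Adj o v)` says that the triangle `o u v` has an odd number of edges.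
theorem adj_iff_iff_adj_iff [Fintype V] [DecidableEq V] (h : NoEvenInduced G k) (hk : 2 ≤ k)
    (hn : k + 2 ≤ Fintype.card V) {o u v u' v' : V} (hu : u ≠ o) (hv : v ≠ o) (hu' : u' ≠ o)
    (hv' : v' ≠ o) (huv : u ≠ v) (huv' : u' ≠ v') :
    (G.Adj u v ↔ (G.Adj o u ↔ G.Adj o v)) ↔ (G.Adj u' v' ↔ (G.Adj o u' ↔ G.Adj o v')) := by
  have step : ∀ {u v w : V}, u ≠ o → v ≠ o → w ≠ o → u ≠ v → u ≠ w →
      ((G.Adj u v ↔ (G.Adj o u ↔ G.Adj o v)) ↔ (G.Adj u w ↔ (G.Adj o u ↔ G.Adj o w))) := by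
    intro u v w hu hv hw huv huw
    have := h.adj_iff_adj_iff_adj_iff_adj hk hn hv.symm hw.symm huv huw
    tauto
  by_cases huu' : u = u'
  · subst huu'
    exact step hu hv hv' huv huv'
  · calc _ ↔ (G.Adj u u' ↔ (G.Adj o u ↔ G.Adj o u')) := step hu hv hu' huv huu'
      _ ↔ (G.Adj u' u ↔ (G.Adj o u' ↔ G.Adj o u)) := by rw [G.adj_comm]; tauto
      _ ↔ _ := step hu' hu hv' (Ne.symm huu') huv'

theorem isTwoCliques_or_isCompleteBipartite [Fintype V] [DecidableEq V]
    (h : NoEvenInduced G k) (hk : 2 ≤ k) (hn : k + 2 ≤ Fintype.card V) :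
    IsTwoCliques G ∨ IsCompleteBipartite G := by
  obtain ⟨o⟩ : Nonempty V := Fintype.card_pos_iff.1 (by omega)
  by_cases hc : ∀ u v, u ≠ o → v ≠ o → u ≠ v → (G.Adj u v ↔ (G.Adj o u ↔ G.Adj o v))
  · left
    refine isTwoCliques_iff.2 ⟨{v | v = o ∨ G.Adj o v}, fun u v huv => ?_⟩
    by_cases hu : u = o
    · subst hu
      simp [huv.symm]
    by_cases hv : v = o
    · subst hv
      simp [hu, G.adj_comm]
    simpa [hu, hv] using hc u v hu hv huv
  · right
    simp only [not_forall] at hc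
    obtain ⟨u₀, v₀, hu₀, hv₀, huv₀, hc⟩ := hc
    refine isCompleteBipartite_of_forall_adj_iff (A := G.neighborSet o) fun u v => ?_
    by_cases huv : u = v
    · simp [huv]
    by_cases hu : u = o
    · subst hu
      simp
    by_cases hv : v = o
    · subst hv
      simp [G.adj_comm]
    have := (h.adj_iff_iff_adj_iff hk hn hu hv hu₀ hv₀ huv huv₀).not.2 hc
    simp only [mem_neighborSet]
    tauto

theorem odd_choose_two_of_isTwoCliques [Fintype V] [DecidableEq V] (h : NoEvenInduced G k)
    (hk : 1 ≤ k) (hn : 2 * k ≤ Fintype.card V) (hG : IsTwoCliques G) :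
    Odd (k.choose 2) ∧ (IsCompleteGraph G ∨ (k % 4 = 3 ∧ IsTwoCliques G)) := by
  obtain ⟨A, hA⟩ := isTwoCliques_iff.1 hG
  wlog hkA : k ≤ #{v | v ∈ A} generalizing A
  · have hAc : ∀ u v, u ≠ v → (G.Adj u v ↔ (u ∈ Aᶜ ↔ v ∈ Aᶜ)) := fun u v huv => by
      rw [hA u v huv, Set.mem_compl_iff, Set.mem_compl_iff, not_iff_not]
    refine this Aᶜ hAc ?_
    have := card_filter_add_card_filter_not (s := univ) (· ∈ A)
    simp only [Set.mem_compl_iff, card_univ] at this ⊢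
    omega
  have hclique : ∀ W : Finset V, W ⊆ ({v | v ∈ A} : Finset V) → G.IsClique (W : Set V) :=
    fun W hW u hu v hv huv =>
      (hA u v huv).2 (iff_of_true (mem_filter.1 (hW hu)).2 (mem_filter.1 (hW hv)).2)
  obtain ⟨W, hWA, hW⟩ := exists_subset_card_eq hkA
  have hodd : Odd (k.choose 2) := by
    simpa [(hclique W hWA).inducedEdges_eq_choose_two, hW] using h W hW
  refine ⟨hodd, ?_⟩
  by_cases hall : ∀ v, v ∈ A
  · exact Or.inl fun u v huv => (hA u v huv).2 (iff_of_true (hall u) (hall v))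
  simp only [not_forall] at hall
  obtain ⟨b, hb⟩ := hall
  obtain ⟨W', hW'A, hW'⟩ := exists_subset_card_eq (show k - 1 ≤ #{v | v ∈ A} by omega)
  have hbW' : b ∉ W' := fun hbW => hb (mem_filter.1 (hW'A hbW)).2
  have hodd' : Odd ((k - 1).choose 2) := by
    have hisolated : {v ∈ W' | G.Adj b v} = ∅ := filter_false_of_mem fun v hv =>
      by simp [hA b v (ne_of_mem_of_not_mem hv hbW').symm, hb, (mem_filter.1 (hW'A hv)).2]
    simpa [inducedEdges_insert hbW', (hclique W' hW'A).inducedEdges_eq_choose_two,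
      hisolated, hW'] using h (insert b W') (by rw [card_insert_of_notMem hbW', hW']; omega)
  rw [Nat.odd_choose_two_iff] at hodd hodd'
  exact Or.inr ⟨by omega, hG⟩

end NoEvenInduced

end SimpleGraph

open SimpleGraph in
theorem stmt_4 {V : Type*} [Fintype V] [DecidableEq V] (G : SimpleGraph V) (k : ℕ)
    (hk : 2 ≤ k) (hn : 2 ^ (2 * k) ≤ Fintype.card V) :
    (∀ W : Finset V, W.card = k → ¬ Even (inducedEdges G W)) ↔
      (Odd (k.choose 2) ∧
        (IsCompleteGraph G ∨ (k % 4 = 3 ∧ IsTwoCliques G))) := by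
  have hn' : 2 * k ≤ Fintype.card V := Nat.lt_two_pow_self.le.trans hn
  simp only [Nat.not_even_iff_odd]
  constructor
  · intro (h : G.NoEvenInduced k)
    rcases h.isTwoCliques_or_isCompleteBipartite hk (by omega) with hG | hG
    · exact h.odd_choose_two_of_isTwoCliques (by omega) hn' hG
    · exact absurd hG (h.not_isCompleteBipartite hn')
  · rintro ⟨hodd, hG | ⟨hk4, hG⟩⟩ W hW
    · rwa [IsClique.inducedEdges_eq_choose_two fun u _ v _ huv => hG u v huv, hW]
    · exact hG.odd_inducedEdges (hW ▸ hk4)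
end

section
/- Let k ≥ 2 and let G be a graph on n ≥ 2^{2k} vertices. Then G contains no induced k-vertex subgraph with an odd number of edges if and only if one of the following holds: (1) G is an independent set (has no edges); (2) k is odd and G is a complete bipartite graph; (3) C(k,2) is even and G is a complete graph; (4) k ≡ 1 (mod 4) and G is the disjoint union of two complete graphs. -/
open scoped Classical

/-!
If every `k`-set spans an even number of edges, then for a `(k - 2)`-set `U` avoiding `x, y, z, w`
the four `k`-sets `U ∪ {x, y}`, `U ∪ {z, w}`, `U ∪ {x, w}`, `U ∪ {z, y}` give, modulo 2,
`a(x, y) + a(z, w) = a(x, w) + a(z, y)` for the adjacency indicator `a`. This forces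
`a(x, y) = c + d(x) + d(y)` for a constant `c` and a labelling `d : V → ZMod 2`: the graph is a
Seidel switching of the empty or of the complete graph. For such a graph a `k`-set `W` spans
`c * (k choose 2) + (k - 1) * ∑_{x ∈ W} d(x)` edges modulo 2, so all `k`-sets are even exactly
when `c * (k choose 2)` is even and either `k` is odd or `d` is constant. The four cases
`c ∈ {0, 1}`, `d` constant or not, are the four families of the statement.
-/

section

open Finset

variable {V : Type*}

theorem exists_card_eq_disjoint [Fintype V] {m : ℕ} (s : Finset V)
    (h : m + #s ≤ Fintype.card V) : ∃ U : Finset V, #U = m ∧ Disjoint U s := by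
  obtain ⟨U, hU, hcard⟩ := exists_subset_card_eq (s := sᶜ) (n := m) (by rw [card_compl]; omega)
  exact ⟨U, hcard, subset_compl_iff_disjoint_right.mp hU⟩

theorem ZMod.add_add_eq_one_iff (a b e : ZMod 2) : a + b + e = 1 ↔ (a = 1 ↔ (b = 1 ↔ e = 1)) := by
  decide +revert

theorem Nat.mod_four_eq_one_iff_odd_and_even_choose_two (k : ℕ) :
    k % 4 = 1 ↔ Odd k ∧ Even (k.choose 2) := by
  rcases Nat.even_or_odd' k with ⟨j, rfl | rfl⟩
  · simp only [Nat.not_odd_iff_even.2 (even_two_mul j), false_and, iff_false]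
    omega
  · have hchoose : (2 * j + 1).choose 2 = (2 * j + 1) * j := by
      rw [Nat.choose_two_right, Nat.add_sub_cancel, mul_left_comm,
        Nat.mul_div_cancel_left _ two_pos]
    rw [hchoose, Nat.even_mul, Nat.even_iff, Nat.even_iff, Nat.odd_iff]
    omega

theorem exists_eq_const_add_add_of_add_eq_add [Fintype V] (hV : 2 < Fintype.card V)
    {f : V → V → ZMod 2} (hsymm : ∀ x y, f x y = f y x)
    (hf : ∀ {x y z w}, x ≠ y → x ≠ w → y ≠ z → z ≠ w → f x y + f z w = f x w + f z y) :
    ∃ (c : ZMod 2) (d : V → ZMod 2), ∀ x y, x ≠ y → f x y = c + d x + d y := by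
  obtain ⟨q, r, s, hqr, hqs, hrs⟩ := Fintype.two_lt_card_iff.mp hV
  have two_eq_zero : (2 : ZMod 2) = 0 := rfl
  -- `h` is constant on pairs avoiding the base point `q`; that constant is `c`.
  set h : V → V → ZMod 2 := fun a b => f a b + f a q + f b q
  have h_symm (a b : V) : h a b = h b a := by simp only [h, hsymm a b]; ring
  have h_congr_left {a b y : V} (hay : a ≠ y) (hby : b ≠ y) (haq : a ≠ q) (hbq : b ≠ q) :
      h a y = h b y := by
    linear_combination hf hay haq hby.symm hbq + (f a q - f b q) * two_eq_zero
  have h_const {x y : V} (hxy : x ≠ y) (hxq : x ≠ q) (hyq : y ≠ q) : h x y = h r s := by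
    by_cases hry : r = y
    · subst hry
      rw [h_congr_left hxy hrs.symm hxq hqs.symm, h_symm]
    · rw [h_congr_left hxy hry hxq hqr.symm, h_symm,
        h_congr_left (Ne.symm hry) hrs.symm hyq hqs.symm, h_symm]
  refine ⟨h r s, fun x => if x = q then h r s else f x q, fun x y hxy => ?_⟩
  by_cases hxq : x = q
  · subst hxq
    simp only [if_neg hxy.symm, if_pos, hsymm x y, CharTwo.add_self_eq_zero, zero_add]
  by_cases hyq : y = q
  · subst hyq
    simp only [if_neg hxq, if_pos, add_comm (h r s), CharTwo.add_cancel_right]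
  simp only [if_neg hxq, if_neg hyq, ← h_const hxy hxq hyq, h]
  linear_combination -(f x q + f y q) * two_eq_zero

section InducedEdges

variable (G : SimpleGraph V)

theorem inducedEdges_eq_card_filter (W : Finset V) :
    inducedEdges G W = #{e ∈ W.sym2 | e ∈ G.edgeSet} := by
  rw [inducedEdges, ← Nat.card_eq_finsetCard]
  exact Nat.card_congr (Equiv.subtypeEquivRight fun e => by simp [mem_sym2_iff, and_comm])

theorem inducedEdges_insert {x : V} {W : Finset V} (hx : x ∉ W) :
    inducedEdges G (insert x W) = inducedEdges G W + #{y ∈ W | G.Adj x y} := by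
  have hnew : {e ∈ (insert x W).image (s(x, ·)) | e ∈ G.edgeSet} =
      {y ∈ W | G.Adj x y}.image (s(x, ·)) := by
    rw [filter_image]
    congr 1
    ext y
    simp only [mem_filter, mem_insert, SimpleGraph.mem_edgeSet]
    constructor
    · rintro ⟨rfl | hy, hadj⟩
      · exact absurd hadj (G.irrefl)
      · exact ⟨hy, hadj⟩
    · exact fun ⟨hy, hadj⟩ => ⟨Or.inr hy, hadj⟩
  have hdisj :
      Disjoint ({y ∈ W | G.Adj x y}.image (s(x, ·))) {e ∈ W.sym2 | e ∈ G.edgeSet} := by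
    simp only [disjoint_left, mem_image, mem_filter, mem_sym2_iff]
    rintro _ ⟨y, -, rfl⟩ ⟨hW, -⟩
    exact hx (hW x (Sym2.mem_mk_left _ _))
  rw [inducedEdges_eq_card_filter, inducedEdges_eq_card_filter, sym2_insert, filter_union, hnew,
    card_union_of_disjoint hdisj, card_image_of_injective _ (fun _ _ => Sym2.congr_right.mp),
    add_comm]

theorem cast_inducedEdges_insert {x : V} {W : Finset V} (hx : x ∉ W) :
    (inducedEdges G (insert x W) : ZMod 2) =
      inducedEdges G W + ∑ y ∈ W, G.adjMatrix (ZMod 2) x y := by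
  simp [inducedEdges_insert G hx]

theorem cast_inducedEdges_insert_insert {x y : V} {U : Finset V} (hxy : x ≠ y) (hx : x ∉ U)
    (hy : y ∉ U) :
    (inducedEdges G (insert x (insert y U)) : ZMod 2) = inducedEdges G U +
      ∑ u ∈ U, G.adjMatrix (ZMod 2) x u + ∑ u ∈ U, G.adjMatrix (ZMod 2) y u +
        G.adjMatrix (ZMod 2) x y := by
  rw [cast_inducedEdges_insert G (by simp [hx, hxy]), cast_inducedEdges_insert G hy,
    sum_insert hy]
  ring

end InducedEdges

theorem adjMatrix_add_adjMatrix_of_forall_even [Fintype V] {G : SimpleGraph V} {k : ℕ}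
    (H : ∀ W : Finset V, #W = k → (inducedEdges G W : ZMod 2) = 0)
    (hk : 2 ≤ k) (hn : k + 2 ≤ Fintype.card V) {x y z w : V} (hxy : x ≠ y) (hxw : x ≠ w)
    (hyz : y ≠ z) (hzw : z ≠ w) :
    G.adjMatrix (ZMod 2) x y + G.adjMatrix (ZMod 2) z w =
      G.adjMatrix (ZMod 2) x w + G.adjMatrix (ZMod 2) z y := by
  obtain ⟨U, hU, hdisj⟩ := exists_card_eq_disjoint (m := k - 2) {x, y, z, w}
    (by have := card_le_four (a := x) (b := y) (c := z) (d := w); omega)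
  simp only [disjoint_insert_right, disjoint_singleton_right] at hdisj
  obtain ⟨hx, hy, hz, hw⟩ := hdisj
  have key {a b : V} (hab : a ≠ b) (ha : a ∉ U) (hb : b ∉ U) :
      (inducedEdges G U : ZMod 2) + ∑ u ∈ U, G.adjMatrix (ZMod 2) a u +
        ∑ u ∈ U, G.adjMatrix (ZMod 2) b u + G.adjMatrix (ZMod 2) a b = 0 := by
    rw [← cast_inducedEdges_insert_insert G hab ha hb]
    exact H _ (by rw [card_insert_of_notMem (by simp [ha, hab]), card_insert_of_notMem hb]; omega)
  linear_combination key hxy hx hy + key hzw hz hw - key hxw hx hw - key hyz.symm hz hy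

/-- `G` arises from the empty graph (`c = 0`) or the complete graph (`c = 1`) by Seidel switching
with respect to the vertex set `{x | d x = 1}`. -/
def IsSeidelSwitch (G : SimpleGraph V) (c : ZMod 2) (d : V → ZMod 2) : Prop :=
  ∀ x y, x ≠ y → G.adjMatrix (ZMod 2) x y = c + d x + d y

theorem exists_isSeidelSwitch_of_forall_even [Fintype V] {G : SimpleGraph V} {k : ℕ}
    (H : ∀ W : Finset V, #W = k → (inducedEdges G W : ZMod 2) = 0) (hk : 2 ≤ k)
    (hn : k + 2 ≤ Fintype.card V) : ∃ c d, IsSeidelSwitch G c d :=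
  exists_eq_const_add_add_of_add_eq_add (by omega) (fun x y => by simp [SimpleGraph.adj_comm])
    (adjMatrix_add_adjMatrix_of_forall_even H hk hn)

namespace IsSeidelSwitch

variable {G : SimpleGraph V} {c : ZMod 2} {d : V → ZMod 2}

theorem cast_inducedEdges (hG : IsSeidelSwitch G c d) (W : Finset V) :
    (inducedEdges G W : ZMod 2) = c * (#W).choose 2 + (#W - 1) * ∑ x ∈ W, d x := by
  induction W using Finset.induction_on with
  | empty => simp [inducedEdges_eq_card_filter]
  | insert x W hx ih =>
    rw [cast_inducedEdges_insert G hx, ih,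
      sum_congr rfl fun y hy => hG x y (ne_of_mem_of_not_mem hy hx).symm, card_insert_of_notMem hx,
      sum_insert hx, Nat.choose_succ_succ', Nat.choose_one_right]
    simp only [sum_add_distrib, sum_const, nsmul_eq_mul]
    push_cast
    ring

theorem forall_even_iff [Fintype V] (hG : IsSeidelSwitch G c d) {k : ℕ} (hk : 1 ≤ k)
    (hn : k + 1 ≤ Fintype.card V) :
    (∀ W : Finset V, #W = k → (inducedEdges G W : ZMod 2) = 0) ↔
      c * k.choose 2 = 0 ∧ ((k : ZMod 2) = 1 ∨ ∀ x y, d x = d y) := by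
  have hform {W : Finset V} (hW : #W = k) :
      (inducedEdges G W : ZMod 2) = c * k.choose 2 + (k - 1) * ∑ x ∈ W, d x := by
    rw [hG.cast_inducedEdges, hW]
  have hsum (h : (k : ZMod 2) = 1 ∨ ∀ x y, d x = d y) {W : Finset V} (hW : #W = k) :
      (k - 1 : ZMod 2) * ∑ x ∈ W, d x = 0 := by
    rcases h with h | h
    · rw [h, sub_self, zero_mul]
    rcases W.eq_empty_or_nonempty with rfl | ⟨x₀, -⟩
    · rw [sum_empty, mul_zero]
    have hconsec : ∀ a : ZMod 2, (a - 1) * a = 0 := by decide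
    rw [sum_congr rfl fun x _ => h x x₀, sum_const, hW, nsmul_eq_mul, ← mul_assoc, hconsec,
      zero_mul]
  constructor
  · intro H
    have hdiff (u v : V) : (k - 1 : ZMod 2) * (d u - d v) = 0 := by
      obtain rfl | huv := eq_or_ne u v
      · rw [sub_self, mul_zero]
      obtain ⟨T, hT, hdisj⟩ := exists_card_eq_disjoint (m := k - 1) {u, v}
        (by rw [card_pair huv]; omega)
      simp only [disjoint_insert_right, disjoint_singleton_right] at hdisj
      have hu := H (insert u T) (by rw [card_insert_of_notMem hdisj.1]; omega)
      have hv := H (insert v T) (by rw [card_insert_of_notMem hdisj.2]; omega)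
      rw [hform (by rw [card_insert_of_notMem hdisj.1]; omega), sum_insert hdisj.1] at hu
      rw [hform (by rw [card_insert_of_notMem hdisj.2]; omega), sum_insert hdisj.2] at hv
      linear_combination hu - hv
    have hd : (k : ZMod 2) = 1 ∨ ∀ x y, d x = d y := by
      refine or_iff_not_imp_left.mpr fun hk1 x y => ?_
      have := hdiff x y
      rwa [mul_eq_zero, sub_eq_zero, sub_eq_zero, or_iff_right hk1] at this
    obtain ⟨W, -, hW⟩ := exists_subset_card_eq (s := (univ : Finset V)) (n := k)
      (by rw [card_univ]; omega)
    have hW0 := H W hW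
    rw [hform hW, hsum hd hW, add_zero] at hW0
    exact ⟨hW0, hd⟩
  · rintro ⟨hc, hd⟩ W hW
    rw [hform hW, hc, hsum hd hW, add_zero]

end IsSeidelSwitch

section GraphClasses

variable {G : SimpleGraph V} {c : ZMod 2}

theorem isSeidelSwitch_iff {d : V → ZMod 2} :
    IsSeidelSwitch G c d ↔ ∀ x y, x ≠ y → (G.Adj x y ↔ c + d x + d y = 1) := by
  refine forall₂_congr fun x y => imp_congr_right fun _ => ?_
  rw [SimpleGraph.adjMatrix_apply]
  generalize c + d x + d y = a
  by_cases h : G.Adj x y <;> simp only [h, if_true, if_false] <;> decide +revert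

theorem exists_isSeidelSwitch_iff :
    (∃ d, IsSeidelSwitch G c d) ↔
      ∃ A : Set V, ∀ x y, x ≠ y → (G.Adj x y ↔ (c = 1 ↔ (x ∈ A ↔ y ∈ A))) := by
  simp only [isSeidelSwitch_iff, ZMod.add_add_eq_one_iff]
  constructor
  · rintro ⟨d, hd⟩
    exact ⟨{x | d x = 1}, hd⟩
  · rintro ⟨A, hA⟩
    exact ⟨fun x => if x ∈ A then 1 else 0, by simpa using hA⟩

theorem isSeidelSwitch_iff_zero_of_forall_eq {d : V → ZMod 2} (hd : ∀ x y, d x = d y) :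
    IsSeidelSwitch G c d ↔ IsSeidelSwitch G c 0 := by
  refine forall₂_congr fun x y => imp_congr_right fun _ => ?_
  simp only [hd y x, Pi.zero_apply, add_assoc, CharTwo.add_self_eq_zero, add_zero]

theorem isSeidelSwitch_zero_zero_iff : IsSeidelSwitch G 0 0 ↔ ∀ u v, ¬G.Adj u v := by
  simp only [isSeidelSwitch_iff, Pi.zero_apply, add_zero, zero_ne_one, iff_false]
  exact ⟨fun h u v huv => h u v huv.ne huv, fun h u v _ => h u v⟩

theorem isSeidelSwitch_one_zero_iff : IsSeidelSwitch G 1 0 ↔ IsCompleteGraph G := by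
  simp only [isSeidelSwitch_iff, Pi.zero_apply, add_zero, iff_true]
  rfl

theorem isCompleteBipartite_iff_exists_isSeidelSwitch :
    IsCompleteBipartite G ↔ ∃ d, IsSeidelSwitch G 0 d := by
  simp only [exists_isSeidelSwitch_iff, zero_ne_one, false_iff]
  refine exists_congr fun A => ⟨fun ⟨h₁, h₂, h₃⟩ x y _ => ?_, fun h => ⟨?_, ?_, ?_⟩⟩
  · grind [SimpleGraph.adj_comm]
  all_goals grind [G.ne_of_adj]

theorem isTwoCliques_iff_exists_isSeidelSwitch : IsTwoCliques G ↔ ∃ d, IsSeidelSwitch G 1 d := by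
  simp only [exists_isSeidelSwitch_iff, true_iff]
  refine exists_congr fun A => ⟨fun ⟨h₁, h₂, h₃⟩ x y _ => ?_, fun h => ⟨?_, ?_, ?_⟩⟩
  · grind [SimpleGraph.adj_comm]
  all_goals grind [G.ne_of_adj]

end GraphClasses

end

theorem stmt_5_general {V : Type*} [Fintype V] (G : SimpleGraph V) (k : ℕ)
    (hk : 2 ≤ k) (hn : 2 ^ (2 * k) ≤ Fintype.card V) :
    (∀ W : Finset V, W.card = k → ¬ Odd (inducedEdges G W)) ↔
      ((∀ u v : V, ¬ G.Adj u v) ∨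
        (Odd k ∧ IsCompleteBipartite G) ∨
        (Even (k.choose 2) ∧ IsCompleteGraph G) ∨
        (k % 4 = 1 ∧ IsTwoCliques G)) := by
  have hn' : k + 2 ≤ Fintype.card V := by have := (2 * k).lt_two_pow_self; omega
  simp only [Nat.not_odd_iff_even, ← ZMod.natCast_eq_zero_iff_even]
  simp only [Nat.mod_four_eq_one_iff_odd_and_even_choose_two, ← ZMod.natCast_eq_zero_iff_even,
    ← ZMod.natCast_eq_one_iff_odd, ← isSeidelSwitch_zero_zero_iff, ← isSeidelSwitch_one_zero_iff,
    isCompleteBipartite_iff_exists_isSeidelSwitch, isTwoCliques_iff_exists_isSeidelSwitch]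
  constructor
  · intro H
    obtain ⟨c, d, hG⟩ := exists_isSeidelSwitch_of_forall_even H hk hn'
    obtain ⟨hc, hd⟩ := (hG.forall_even_iff (by omega) (by omega)).1 H
    obtain rfl | rfl := (by decide : ∀ a : ZMod 2, a = 0 ∨ a = 1) c
    · rcases hd with hk1 | hd
      · exact Or.inr (Or.inl ⟨hk1, d, hG⟩)
      · exact Or.inl ((isSeidelSwitch_iff_zero_of_forall_eq hd).1 hG)
    · rw [one_mul] at hc
      rcases hd with hk1 | hd
      · exact Or.inr (Or.inr (Or.inr ⟨⟨hk1, hc⟩, d, hG⟩))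
      · exact Or.inr (Or.inr (Or.inl ⟨hc, (isSeidelSwitch_iff_zero_of_forall_eq hd).1 hG⟩))
  · have hk1 : 1 ≤ k := by omega
    have hn1 : k + 1 ≤ Fintype.card V := by omega
    rintro (h | ⟨hodd, d, h⟩ | ⟨heven, h⟩ | ⟨⟨hodd, heven⟩, d, h⟩)
    · exact (h.forall_even_iff hk1 hn1).2 ⟨zero_mul _, Or.inr fun _ _ => rfl⟩
    · exact (h.forall_even_iff hk1 hn1).2 ⟨zero_mul _, Or.inl hodd⟩
    · exact (h.forall_even_iff hk1 hn1).2 ⟨by rw [heven, mul_zero], Or.inr fun _ _ => rfl⟩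
    · exact (h.forall_even_iff hk1 hn1).2 ⟨by rw [heven, mul_zero], Or.inl hodd⟩

theorem stmt_5 {V : Type*} [Fintype V] [DecidableEq V] (G : SimpleGraph V) (k : ℕ)
    (hk : 2 ≤ k) (hn : 2 ^ (2 * k) ≤ Fintype.card V) :
    (∀ W : Finset V, W.card = k → ¬ Odd (inducedEdges G W)) ↔
      ((∀ u v : V, ¬ G.Adj u v) ∨
        (Odd k ∧ IsCompleteBipartite G) ∨
        (Even (k.choose 2) ∧ IsCompleteGraph G) ∨
        (k % 4 = 1 ∧ IsTwoCliques G)) :=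
  stmt_5_general G k hk hn
end

section
/- Let k ≥ 3 and let G be a graph on n ≥ 2^{2k} vertices. Then either G contains no induced k-vertex subgraph with an odd number of edges, or G contains at least C(n,k)/(2^{2k²+1} k² n²) induced k-vertex subgraphs with an odd number of edges. -/
/-!
Work with parities in `ZMod 2`. Replacing a vertex `u` of a set by an outside vertex `v`
changes the parity of the number of induced edges by `∑ s, (A u s + A v s)` over the common
part, where `A` is the adjacency matrix. If every `k`-set within two such swaps of `W` has the
parity of `W`, then these increments vanish for single swaps from `W`, and double swaps show
that `A u w + A v w = A u j + A v j` whenever `w ∈ W` and `j ∉ W` (with `w ≠ u`, `j ≠ v`).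
These two facts propagate the parity of `W` to every `k`-set, by induction on the distance
from `W`.

So as soon as one `k`-set is odd, every `k`-set is within two swaps of an odd one. An odd set
has at most `(k² + 1)(n² + 1)` such neighbours, whence `C(n, k) ≤ (k² + 1)(n² + 1) · #odd`.
-/

open scoped Classical

open Finset

theorem Finset.sum_eq_sum_of_card_eq_of_forall_sdiff {α β : Type*} [DecidableEq α]
    [AddCommMonoid β] {S T : Finset α} (f : α → β) (hST : #S = #T)
    (h : ∀ a ∈ S \ T, ∀ b ∈ T \ S, f a = f b) : ∑ a ∈ S, f a = ∑ b ∈ T, f b := by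
  rw [← sum_inter_add_sum_sdiff S T, ← sum_inter_add_sum_sdiff T S, inter_comm]
  congr 1
  rcases (T \ S).eq_empty_or_nonempty with hTS | ⟨b₀, hb₀⟩
  · rw [hTS, card_eq_zero.1 ((card_sdiff_comm hST).trans (by rw [hTS, card_empty]))]
  obtain ⟨a₀, ha₀⟩ := card_pos.1 ((card_sdiff_comm hST).trans_gt (card_pos.2 ⟨b₀, hb₀⟩))
  calc ∑ a ∈ S \ T, f a = ∑ _a ∈ S \ T, f b₀ := sum_congr rfl fun a ha => h a ha b₀ hb₀
    _ = ∑ _b ∈ T \ S, f b₀ := by rw [sum_const, sum_const, card_sdiff_comm hST]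
    _ = ∑ b ∈ T \ S, f b :=
      sum_congr rfl fun b hb => (h a₀ ha₀ b₀ hb₀).symm.trans (h a₀ ha₀ b hb)

theorem Finset.card_sdiff_le_two_of_subset_insert_insert {α : Type*} [DecidableEq α]
    {Y W : Finset α} {a b : α} (h : Y ⊆ insert a (insert b W)) : #(Y \ W) ≤ 2 := by
  refine (card_le_card fun x hx => ?_).trans (card_le_two (a := a) (b := b))
  grind

section Parity

variable {V : Type*} (G : SimpleGraph V)

noncomputable def inducedParity (X : Finset V) : ZMod 2 := inducedEdges G X

theorem inducedEdges_eq_card_filter_sym2 (U : Finset V) :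
    inducedEdges G U = #{e ∈ U.sym2 | e ∈ G.edgeSet} := by
  rw [inducedEdges, ← Nat.card_eq_finsetCard]
  exact Nat.card_congr (Equiv.subtypeEquivRight fun e => by simp [mem_sym2_iff, and_comm])

variable [DecidableEq V]

theorem inducedParity_insert {Z : Finset V} {u : V} (hu : u ∉ Z) :
    inducedParity G (insert u Z) = inducedParity G Z + ∑ s ∈ Z, G.adjMatrix (ZMod 2) u s := by
  simp only [inducedParity, inducedEdges_eq_card_filter_sym2, natCast_card_filter]
  rw [← cons_eq_insert u Z hu, sym2_cons, sum_disjUnion, sum_map, sum_cons]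
  simp [add_comm]

theorem inducedParity_insert_swap {Z : Finset V} {u v : V} (hu : u ∉ Z) (hv : v ∉ Z) :
    inducedParity G (insert v Z) = inducedParity G (insert u Z) +
      ∑ s ∈ Z, (G.adjMatrix (ZMod 2) u s + G.adjMatrix (ZMod 2) v s) := by
  rw [inducedParity_insert G hu, inducedParity_insert G hv, sum_add_distrib, add_assoc,
    CharTwo.add_cancel_left]

theorem sum_adjMatrix_add_eq_zero {Z : Finset V} {u v : V} (hu : u ∉ Z) (hv : v ∉ Z)
    (h : inducedParity G (insert u Z) = inducedParity G (insert v Z)) :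
    ∑ s ∈ Z, (G.adjMatrix (ZMod 2) u s + G.adjMatrix (ZMod 2) v s) = 0 := by
  have := inducedParity_insert_swap G hu hv
  rwa [h, left_eq_add] at this

variable {G} {W : Finset V}

theorem sum_adjMatrix_add_erase_eq_zero
    (h : ∀ Y : Finset V, #Y = #W → #(Y \ W) ≤ 2 → inducedParity G Y = inducedParity G W)
    {u v : V} (hu : u ∈ W) (hv : v ∉ W) :
    ∑ s ∈ W.erase u, (G.adjMatrix (ZMod 2) u s + G.adjMatrix (ZMod 2) v s) = 0 := by
  have hvu : v ∉ W.erase u := fun hv' => hv (mem_of_mem_erase hv')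
  refine sum_adjMatrix_add_eq_zero G (notMem_erase u W) hvu ?_
  rw [insert_erase hu]
  refine (h _ ?_ (card_sdiff_le_two_of_subset_insert_insert (a := v) (b := v) ?_)).symm
  · rw [card_insert_of_notMem hvu, card_erase_add_one hu]
  · grind

theorem adjMatrix_add_eq_of_mem_of_notMem
    (h : ∀ Y : Finset V, #Y = #W → #(Y \ W) ≤ 2 → inducedParity G Y = inducedParity G W)
    {u v w j : V} (hu : u ∈ W) (hv : v ∉ W) (hw : w ∈ W) (hwu : w ≠ u) (hj : j ∉ W)
    (hjv : j ≠ v) :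
    G.adjMatrix (ZMod 2) u w + G.adjMatrix (ZMod 2) v w =
      G.adjMatrix (ZMod 2) u j + G.adjMatrix (ZMod 2) v j := by
  set Z := (W.erase u).erase w
  have hwZ : w ∈ W.erase u := mem_erase.2 ⟨hwu, hw⟩
  have hjZ : j ∉ Z := fun hj' => hj (mem_of_mem_erase (mem_of_mem_erase hj'))
  have hW := sum_adjMatrix_add_erase_eq_zero h hu hv
  rw [← add_sum_erase _ _ hwZ] at hW
  -- `insert u (insert j Z)` is `W` with `w` replaced by `j`; `insert v (insert j Z)` also has `u`
  -- replaced by `v`.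
  have hWj : ∑ s ∈ insert j Z, (G.adjMatrix (ZMod 2) u s + G.adjMatrix (ZMod 2) v s) = 0 := by
    have hcard : #(insert j Z) + 1 = #W := by
      rw [card_insert_of_notMem hjZ, card_erase_add_one hwZ, card_erase_add_one hu]
    have hnear :
        ∀ x ∉ insert j Z, inducedParity G (insert x (insert j Z)) = inducedParity G W := by
      intro x hxZ
      refine h _ (by rw [card_insert_of_notMem hxZ, hcard]) ?_
      exact card_sdiff_le_two_of_subset_insert_insert (a := x) (b := j) (by grind)
    have huZ : u ∉ insert j Z := by grind
    have hvZ : v ∉ insert j Z := by grind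
    exact sum_adjMatrix_add_eq_zero G huZ hvZ
      ((hnear u huZ).trans (hnear v hvZ).symm)
  rw [sum_insert hjZ] at hWj
  exact add_right_cancel (hW.trans hWj.symm)

theorem inducedParity_eq_of_forall_card_sdiff_le_two
    (h : ∀ Y : Finset V, #Y = #W → #(Y \ W) ≤ 2 → inducedParity G Y = inducedParity G W)
    {Y : Finset V} (hY : #Y = #W) : inducedParity G Y = inducedParity G W := by
  induction hm : #(Y \ W) generalizing Y with
  | zero =>
    rw [eq_of_subset_of_card_le (sdiff_eq_empty_iff_subset.1 (card_eq_zero.1 hm)) hY.ge]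
  | succ m ih =>
    obtain ⟨v, hv⟩ := card_pos.1 (hm.trans_gt m.succ_pos)
    obtain ⟨u, hu⟩ := card_pos.1 ((card_sdiff_comm hY).symm.trans_gt (hm.trans_gt m.succ_pos))
    rw [mem_sdiff] at hu hv
    set Z := Y.erase v
    have huZ : u ∉ Z := fun hu' => hu.2 (mem_of_mem_erase hu')
    have hcard : #Z + 1 = #W := by rw [card_erase_add_one hv.1, hY]
    have hZW : #Z = #(W.erase u) := by rw [card_erase_of_mem hu.1]; omega
    have ih' : inducedParity G (insert u Z) = inducedParity G W := by
      refine ih (by rw [card_insert_of_notMem huZ, hcard]) ?_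
      rw [insert_sdiff_of_mem _ hu.1, erase_sdiff_comm, card_erase_of_mem (mem_sdiff.2 hv), hm,
        Nat.add_sub_cancel]
    -- `Z` and `W.erase u` differ by vertices of `W` against vertices outside `W`, on which the
    -- summand agrees; so the increment of this swap is the one of a single swap from `W`.
    rw [← insert_erase hv.1, inducedParity_insert_swap G huZ (notMem_erase v Y), ih',
      sum_eq_sum_of_card_eq_of_forall_sdiff _ hZW, sum_adjMatrix_add_erase_eq_zero h hu.1 hv.2,
      add_zero]
    intro a ha b hb
    simp only [Z, mem_sdiff, mem_erase] at ha hb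
    refine (adjMatrix_add_eq_of_mem_of_notMem h hu.1 hv.2 hb.1.2 hb.1.1 ?_ ha.1.1).symm
    grind

end Parity

section Counting

variable {α : Type*} [DecidableEq α]

theorem card_filter_card_le_two_le (s : Finset α) :
    #{t ∈ s.powerset | #t ≤ 2} ≤ #s ^ 2 + 1 := by
  calc #{t ∈ s.powerset | #t ≤ 2}
      ≤ #(insert ∅ ((s ×ˢ s).image fun p => {p.1, p.2})) := card_le_card fun t ht => ?_
    _ ≤ #(s ×ˢ s) + 1 := (card_insert_le _ _).trans (by gcongr; exact card_image_le)
    _ = #s ^ 2 + 1 := by rw [card_product, sq]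
  obtain ⟨hts, ht⟩ := mem_filter.1 ht
  rw [mem_powerset] at hts
  rw [mem_insert, mem_image]
  interval_cases hcard : #t
  · exact .inl (card_eq_zero.1 hcard)
  · obtain ⟨a, rfl⟩ := card_eq_one.1 hcard
    exact .inr ⟨(a, a), by simpa using hts, by simp⟩
  · obtain ⟨a, b, -, rfl⟩ := card_eq_two.1 hcard
    exact .inr ⟨(a, b), by simpa [insert_subset_iff] using hts, rfl⟩

variable [Fintype α]

theorem card_filter_card_sdiff_le_two_le (X : Finset α) :
    #{Y : Finset α | #Y = #X ∧ #(X \ Y) ≤ 2} ≤ (#X ^ 2 + 1) * (Fintype.card α ^ 2 + 1) := by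
  calc #{Y : Finset α | #Y = #X ∧ #(X \ Y) ≤ 2}
      ≤ #({t ∈ X.powerset | #t ≤ 2} ×ˢ {t ∈ (univ : Finset α).powerset | #t ≤ 2}) := by
        refine card_le_card_of_injOn (fun Y => (X \ Y, Y \ X)) (fun Y hY => ?_) ?_
        · simp only [coe_filter, Set.mem_ofPred_eq, mem_univ, true_and] at hY
          simp [card_sdiff_comm hY.1, hY.2]
        · intro Y₁ _ Y₂ _ hY
          obtain ⟨h₁, h₂⟩ := Prod.mk.inj hY
          rw [← sdiff_union_inter Y₁ X, ← sdiff_union_inter Y₂ X, h₂, inter_comm Y₁,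
            inter_comm Y₂, ← sdiff_sdiff_self_left, ← sdiff_sdiff_self_left, h₁]
    _ ≤ (#X ^ 2 + 1) * (Fintype.card α ^ 2 + 1) := by
      rw [card_product, ← card_univ]
      exact Nat.mul_le_mul (card_filter_card_le_two_le X) (card_filter_card_le_two_le univ)

theorem card_le_card_mul_of_forall_exists_card_sdiff_le_two {S T : Finset (Finset α)} {k : ℕ}
    (hS : ∀ Y ∈ S, #Y = k) (hT : ∀ X ∈ T, #X = k)
    (h : ∀ Y ∈ S, ∃ X ∈ T, #(X \ Y) ≤ 2) :
    #S ≤ #T * ((k ^ 2 + 1) * (Fintype.card α ^ 2 + 1)) := by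
  calc #S ≤ #(T.biUnion fun X => {Y : Finset α | #Y = #X ∧ #(X \ Y) ≤ 2}) := by
        refine card_le_card fun Y hY => ?_
        obtain ⟨X, hX, hXY⟩ := h Y hY
        exact mem_biUnion.2 ⟨X, hX, by simp [hS Y hY, hT X hX, hXY]⟩
    _ ≤ ∑ X ∈ T, #{Y : Finset α | #Y = #X ∧ #(X \ Y) ≤ 2} := card_biUnion_le
    _ ≤ #T * ((k ^ 2 + 1) * (Fintype.card α ^ 2 + 1)) := by
      rw [← smul_eq_mul]
      refine sum_le_card_nsmul _ _ _ fun X hX => ?_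
      simpa [hT X hX] using card_filter_card_sdiff_le_two_le X

end Counting

theorem exists_odd_inducedEdges_card_sdiff_le_two {V : Type*} [DecidableEq V]
    (G : SimpleGraph V) {k : ℕ}
    (hodd : ∃ W₀ : Finset V, #W₀ = k ∧ Odd (inducedEdges G W₀))
    {W : Finset V} (hW : #W = k) :
    ∃ X : Finset V, (#X = k ∧ Odd (inducedEdges G X)) ∧ #(X \ W) ≤ 2 := by
  obtain ⟨W₀, hW₀, hodd₀⟩ := hodd
  by_contra! hfar
  have heven : ∀ X : Finset V, #X = #W → #(X \ W) ≤ 2 → inducedParity G X = 0 :=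
    fun X hX hXW => ZMod.natCast_eq_zero_iff_even.2 <| Nat.not_odd_iff_even.1 fun hXo =>
      (hfar X ⟨hX.trans hW, hXo⟩).not_ge hXW
  have hW0 : inducedParity G W = 0 := heven W rfl (by simp)
  have := inducedParity_eq_of_forall_card_sdiff_le_two
    (fun X hX hXW => (heven X hX hXW).trans hW0.symm) (hW₀.trans hW.symm)
  rw [hW0, inducedParity, ZMod.natCast_eq_zero_iff_even] at this
  exact Nat.not_even_iff_odd.2 hodd₀ this

theorem sq_add_one_mul_sq_add_one_le {k n : ℕ} (hk : k ≠ 0) (hn : n ≠ 0) :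
    (k ^ 2 + 1) * (n ^ 2 + 1) ≤ 2 ^ (2 * k ^ 2 + 1) * k ^ 2 * n ^ 2 := by
  have h4 : 2 ^ 2 ≤ 2 ^ (2 * k ^ 2 + 1) :=
    Nat.pow_le_pow_right two_pos (by nlinarith [Nat.one_le_iff_ne_zero.2 hk])
  calc (k ^ 2 + 1) * (n ^ 2 + 1) ≤ (2 * k ^ 2) * (2 * n ^ 2) := by
        gcongr <;> nlinarith [Nat.one_le_iff_ne_zero.2 hk, Nat.one_le_iff_ne_zero.2 hn]
    _ = 2 ^ 2 * k ^ 2 * n ^ 2 := by ring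
    _ ≤ 2 ^ (2 * k ^ 2 + 1) * k ^ 2 * n ^ 2 := by gcongr

theorem stmt_10_general {V : Type*} [Fintype V] (G : SimpleGraph V) (k : ℕ) :
    Nat.card {W : Finset V // W.card = k ∧ Odd (inducedEdges G W)} = 0 ∨
      ((Fintype.card V).choose k : ℝ) /
          ((2 : ℝ) ^ (2 * k ^ 2 + 1) * (k : ℝ) ^ 2 * (Fintype.card V : ℝ) ^ 2) ≤
        (Nat.card {W : Finset V // W.card = k ∧ Odd (inducedEdges G W)} : ℝ) := by
  rw [Nat.card_eq_fintype_card, Fintype.card_subtype]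
  set oddSets : Finset (Finset V) := {W | #W = k ∧ Odd (inducedEdges G W)}
  rcases oddSets.eq_empty_or_nonempty with hempty | ⟨W₀, hW₀⟩
  · exact .inl (by rw [hempty, card_empty])
  refine .inr ?_
  have hcount : (Fintype.card V).choose k ≤
      #oddSets * ((k ^ 2 + 1) * (Fintype.card V ^ 2 + 1)) := by
    rw [← card_univ, ← card_powersetCard]
    refine card_le_card_mul_of_forall_exists_card_sdiff_le_two (fun W => mem_powersetCard_univ.1)
      (fun X hX => (mem_filter.1 hX).2.1) fun W hW => ?_
    obtain ⟨X, hX, hXW⟩ := exists_odd_inducedEdges_card_sdiff_le_two G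
      ⟨W₀, (mem_filter.1 hW₀).2⟩ (mem_powersetCard_univ.1 hW)
    exact ⟨X, mem_filter.2 ⟨mem_univ X, hX⟩, hXW⟩
  -- For `k = 0` or `n = 0` the denominator vanishes, and division by zero gives `0`.
  rcases eq_or_ne k 0 with rfl | hk
  · simp
  rcases eq_or_ne (Fintype.card V) 0 with hn | hn
  · simp [hn]
  rw [div_le_iff₀ (by positivity)]
  exact_mod_cast hcount.trans (Nat.mul_le_mul_left _ (sq_add_one_mul_sq_add_one_le hk hn))

theorem stmt_10 {V : Type*} [Fintype V] [DecidableEq V] (G : SimpleGraph V) (k : ℕ)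
    (hk : 3 ≤ k) (hn : 2 ^ (2 * k) ≤ Fintype.card V) :
    Nat.card {W : Finset V // W.card = k ∧ Odd (inducedEdges G W)} = 0 ∨
      ((Fintype.card V).choose k : ℝ) /
          ((2 : ℝ) ^ (2 * k ^ 2 + 1) * (k : ℝ) ^ 2 * (Fintype.card V : ℝ) ^ 2) ≤
        (Nat.card {W : Finset V // W.card = k ∧ Odd (inducedEdges G W)} : ℝ) :=
  stmt_10_general G k
end
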